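/- Let (V, E, o, t, inv) be a finite multigraph with ν = #V, let m : E → ℝ^d and α : E → ℝ be 1-forms, and Q : V → ℝ. For θ ∈ ℝ^d let H(θ) = Δ_{m,α}(θ) + Q with eigenvalues λ_1(θ) ≤ … ≤ λ_ν(θ). Then Σ_{n=1}^{ν} ( sup_{θ ∈ ℝ^d} λ_n(θ) − inf_{θ ∈ ℝ^d} λ_n(θ) ) ≤ 2 · #supp m, and consequently the Lebesgue measure of the set Σ = { x ∈ ℝ : x is an eigenvalue of H(θ) for some θ ∈ ℝ^d } satisfies |Σ| ≤ 2 · #supp m (note 2·#supp m = 4I where I is half the number of oriented edges in supp m). (Paper: Theorem 2.5(ii) at the level of fiber operators.) -/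

import Mathlib

open scoped Classical
open Finset

noncomputable section

/-- The degree of a vertex: the number of oriented edges starting at it. -/
def mdeg {V E : Type} [Fintype E] (o : E → V) (v : V) : ℕ :=
  (Finset.univ.filter fun e => o e = v).card

/-- The combinatorial magnetic Laplacian `Δ_α`. -/
def magLap {V E : Type} [Fintype E] (o t : E → V) (α : E → ℝ)
    (f : V → ℂ) (v : V) : ℂ :=
  ∑ e ∈ Finset.univ.filter (fun e => o e = v),
    (f v - Complex.exp (Complex.I * (α e : ℂ)) * f (t e))

/-- The fiber magnetic Laplacian `Δ_{m,φ}(θ)`. -/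
def fiberLap {V E : Type} [Fintype E] {d : ℕ} (o t : E → V)
    (m : E → Fin d → ℝ) (φ : E → ℝ) (θ : Fin d → ℝ) (f : V → ℂ) (v : V) : ℂ :=
  (mdeg o v : ℂ) * f v -
    ∑ e ∈ Finset.univ.filter (fun e => o e = v),
      Complex.exp (Complex.I * ((φ e + ∑ i, m e i * θ i : ℝ) : ℂ)) * f (t e)

/-- Standard inner product on `ℂ^V` (conjugate-linear in the first argument). -/
def dotC {V : Type} [Fintype V] (f g : V → ℂ) : ℂ :=
  ∑ v, (starRingEnd ℂ) (f v) * g v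

/-- `lam` lists the eigenvalues of the operator `T` on `ℂ^V` in nondecreasing
order, counted with multiplicity (witnessed by an orthonormal eigenbasis). -/
def IsEigList {V : Type} [Fintype V] (T : (V → ℂ) → (V → ℂ))
    (lam : Fin (Fintype.card V) → ℝ) : Prop :=
  Monotone lam ∧ ∃ u : Fin (Fintype.card V) → (V → ℂ),
    (∀ i j, dotC (u i) (u j) = if i = j then (1 : ℂ) else 0) ∧
    ∀ i, T (u i) = fun v => ((lam i : ℝ) : ℂ) * u i v

/-- A closed walk in the multigraph. -/
def IsClosedWalk {V E : Type} (o t : E → V) {k : ℕ} (c : Fin (k + 1) → E) : Prop :=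
  (∀ i : Fin k, t (c i.castSucc) = o (c i.succ)) ∧ t (c (Fin.last k)) = o (c 0)

/-- Two forms have the same flux along every closed walk. -/
def SameFlux {V E W : Type} [AddCommMonoid W] (o t : E → V) (b b' : E → W) : Prop :=
  ∀ (k : ℕ) (c : Fin (k + 1) → E), IsClosedWalk o t c →
    ∑ i, b (c i) = ∑ i, b' (c i)

/-- Connectivity of the multigraph: any two distinct vertices are the endpoints
of some walk. -/
def MGConnected {V E : Type} (o t : E → V) : Prop :=
  ∀ u v : V, u ≠ v → ∃ (k : ℕ) (c : Fin (k + 1) → E),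
    (∀ i : Fin k, t (c i.castSucc) = o (c i.succ)) ∧ o (c 0) = u ∧ t (c (Fin.last k)) = v

/-- The set of fluxes of a form along all closed walks. -/
def fluxSet {V E W : Type} [AddCommMonoid W] (o t : E → V) (b : E → W) : Set W :=
  {w | ∃ (k : ℕ) (c : Fin (k + 1) → E), IsClosedWalk o t c ∧ ∑ i, b (c i) = w}

/-- The number of oriented edges in the support of a form. -/
def suppCard {E : Type} [Fintype E] {W : Type} [Zero W] (b : E → W) : ℕ :=
  (Finset.univ.filter fun e => b e ≠ 0).card

/-- The integer lattice `ℤ^d` inside `ℝ^d`. -/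
def intLattice (d : ℕ) : Set (Fin d → ℝ) :=
  {w | ∀ i, ∃ z : ℤ, w i = (z : ℝ)}

/-! Write `H(θ) = H₀ - A(θ)`, where `H₀` collects the diagonal and the hopping along the edges
with `m e = 0` (it does not depend on `θ`) and `A(θ)` the hopping along `supp m`. Pairing every
edge with its reverse, `⟨f, (D ± A(θ)) f⟩ = ½ ∑_{e ∈ supp m} |f (o e) ± ζ_e f (t e)|² ≥ 0`, where
`ζ_e = exp (i (α e + ⟨m e, θ⟩))` and `D` is the diagonal matrix of degrees in `supp m`. Hence
`H₀ - D ≤ H(θ) ≤ H₀ + D`, and by min-max `λₙ(H₀ - D) ≤ λₙ(θ) ≤ λₙ(H₀ + D)`. The band widths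
therefore sum to at most `tr (2 D) = 2 #supp m`, and the spectrum, the union of the bands, has at
most that measure. -/

open Matrix ComplexConjugate
open scoped ComplexOrder

section Orthonormal

variable {V : Type} [Fintype V]

theorem dotC_eq_star_dotProduct (f g : V → ℂ) : dotC f g = star f ⬝ᵥ g := rfl

theorem dotC_sum_smul_right {ι : Type*} [Fintype ι] (f : V → ℂ) (c : ι → ℂ) (g : ι → V → ℂ) :
    dotC f (∑ i, c i • g i) = ∑ i, c i * dotC f (g i) := by
  simp only [dotC_eq_star_dotProduct, dotProduct_sum, dotProduct_smul, smul_eq_mul]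

theorem dotC_sum_smul_left {ι : Type*} [Fintype ι] (f : V → ℂ) (c : ι → ℂ) (g : ι → V → ℂ) :
    dotC (∑ i, c i • g i) f = ∑ i, conj (c i) * dotC (g i) f := by
  simp only [dotC_eq_star_dotProduct, star_sum, star_smul, sum_dotProduct, smul_dotProduct,
    smul_eq_mul, Complex.star_def]

variable {ι : Type*} [Fintype ι] [DecidableEq ι] {u : ι → V → ℂ}
  (hu : ∀ i j, dotC (u i) (u j) = if i = j then 1 else 0)
include hu

theorem dotC_sum_smul_of_orthonormal (c : ι → ℂ) (j : ι) :
    dotC (u j) (∑ i, c i • u i) = c j := by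
  simp [dotC_sum_smul_right, hu]

theorem dotC_sum_smul_sum_smul_of_orthonormal (c d : ι → ℂ) :
    dotC (∑ i, c i • u i) (∑ i, d i • u i) = ∑ i, conj (c i) * d i := by
  simp only [dotC_sum_smul_left, dotC_sum_smul_of_orthonormal hu]

theorem sum_dotC_smul_of_orthonormal (hcard : Fintype.card ι = Fintype.card V) (f : V → ℂ) :
    ∑ i, dotC (u i) f • u i = f := by
  have hli : LinearIndependent ℂ u := by
    refine Fintype.linearIndependent_iff.2 fun c hc i => ?_
    rw [← dotC_sum_smul_of_orthonormal hu c i, hc]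
    simp [dotC]
  have hspan := hli.span_eq_top_of_card_eq_finrank' (by simpa using hcard)
  obtain ⟨c, rfl⟩ :=
    Submodule.mem_span_range_iff_exists_fun ℂ |>.1 (hspan ▸ Submodule.mem_top (x := f))
  simp only [dotC_sum_smul_of_orthonormal hu]

end Orthonormal

section Eigenbasis

variable {V : Type} [Fintype V] {ι : Type*} [Fintype ι]
  {M : Matrix V V ℂ} {lam : ι → ℝ} {u : ι → V → ℂ}

theorem mulVec_sum_smul_of_eigen (he : ∀ i, M *ᵥ u i = (lam i : ℂ) • u i) (c : ι → ℂ) :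
    M *ᵥ ∑ i, c i • u i = ∑ i, (lam i * c i) • u i := by
  simp only [mulVec_sum, mulVec_smul, he, smul_smul, mul_comm]

variable [DecidableEq ι] (hu : ∀ i j, dotC (u i) (u j) = if i = j then 1 else 0)
include hu

theorem re_dotC_self_sum_smul (c : ι → ℂ) :
    (dotC (∑ i, c i • u i) (∑ i, c i • u i)).re = ∑ i, Complex.normSq (c i) := by
  simp [dotC_sum_smul_sum_smul_of_orthonormal hu, Complex.normSq_apply]

theorem re_dotC_mulVec_sum_smul (he : ∀ i, M *ᵥ u i = (lam i : ℂ) • u i) (c : ι → ℂ) :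
    (dotC (∑ i, c i • u i) (M *ᵥ ∑ i, c i • u i)).re = ∑ i, Complex.normSq (c i) * lam i := by
  simp only [mulVec_sum_smul_of_eigen he, dotC_sum_smul_sum_smul_of_orthonormal hu,
    Complex.re_sum, Complex.normSq_apply]
  exact Finset.sum_congr rfl fun i _ => by simp; ring

theorem re_dotC_mulVec_sum_smul_le (he : ∀ i, M *ᵥ u i = (lam i : ℂ) • u i) (c : ι → ℂ) {L : ℝ}
    (hL : ∀ i, lam i ≤ L) :
    (dotC (∑ i, c i • u i) (M *ᵥ ∑ i, c i • u i)).re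
      ≤ L * (dotC (∑ i, c i • u i) (∑ i, c i • u i)).re := by
  rw [re_dotC_mulVec_sum_smul hu he, re_dotC_self_sum_smul hu, mul_sum]
  exact sum_le_sum fun i _ => by nlinarith [hL i, Complex.normSq_nonneg (c i)]

theorem le_re_dotC_mulVec (hcard : Fintype.card ι = Fintype.card V)
    (he : ∀ i, M *ᵥ u i = (lam i : ℂ) • u i) (f : V → ℂ) {L : ℝ}
    (hL : ∀ i, dotC (u i) f ≠ 0 → L ≤ lam i) :
    L * (dotC f f).re ≤ (dotC f (M *ᵥ f)).re := by
  rw [← sum_dotC_smul_of_orthonormal hu hcard f, re_dotC_mulVec_sum_smul hu he,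
    re_dotC_self_sum_smul hu, mul_sum]
  refine sum_le_sum fun i _ => ?_
  by_cases hi : dotC (u i) f = 0
  · simp [hi]
  · nlinarith [hL i hi, Complex.normSq_nonneg (dotC (u i) f)]

end Eigenbasis

theorem exists_ne_zero_forall_dotC_sum_smul_eq_zero {V : Type} [Fintype V] {κ κ' : Type*}
    [Fintype κ] [Fintype κ'] (w : κ → V → ℂ) (u : κ' → V → ℂ)
    (hcard : Fintype.card κ' < Fintype.card κ) :
    ∃ a : κ → ℂ, a ≠ 0 ∧ ∀ j, dotC (u j) (∑ i, a i • w i) = 0 := by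
  let U : Matrix κ' V ℂ := Matrix.of fun j v => star (u j v)
  have hker := LinearMap.ker_ne_bot_of_finrank_lt
    (f := U.mulVecLin ∘ₗ Fintype.linearCombination ℂ w) (by simpa using hcard)
  obtain ⟨a, ha, ha0⟩ := Submodule.ne_bot_iff _ |>.1 hker
  refine ⟨a, ha0, fun j => ?_⟩
  have := congrFun ha j
  simp only [LinearMap.comp_apply, Fintype.linearCombination_apply, mulVecLin_apply,
    mulVec_sum, mulVec_smul, Finset.sum_apply, Pi.smul_apply, smul_eq_mul, Pi.zero_apply] at this
  rw [dotC_sum_smul_right]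
  exact this

namespace IsEigList

variable {V : Type} [Fintype V]

theorem le_of_posSemidef_sub {M₁ M₂ : Matrix V V ℂ} {l₁ l₂ : Fin (Fintype.card V) → ℝ}
    (h₁ : IsEigList (M₁ *ᵥ ·) l₁) (h₂ : IsEigList (M₂ *ᵥ ·) l₂) (hM : (M₂ - M₁).PosSemidef) :
    l₁ ≤ l₂ := by
  intro n
  obtain ⟨hmono₁, u, hu, hue⟩ := h₁
  obtain ⟨hmono₂, w, hw, hwe⟩ := h₂
  -- min-max: a nonzero vector in the span of the first `n + 1` eigenvectors of `M₂`
  -- orthogonal to the first `n` eigenvectors of `M₁`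
  let w' : Iic n → V → ℂ := fun i => w i
  have hw' : ∀ i j, dotC (w' i) (w' j) = if i = j then 1 else 0 := fun i j =>
    (hw i j).trans (if_congr Subtype.ext_iff.symm rfl rfl)
  obtain ⟨a, ha0, ha⟩ := exists_ne_zero_forall_dotC_sum_smul_eq_zero w'
    (fun j : Iio n => u j) (by rw [Fintype.card_coe, Fintype.card_coe]; simp)
  set f := ∑ i, a i • w' i
  have hpos : 0 < (dotC f f).re := by
    obtain ⟨i, hi⟩ := Function.ne_iff.1 ha0
    rw [re_dotC_self_sum_smul hw']
    exact sum_pos' (fun _ _ => Complex.normSq_nonneg _) ⟨i, mem_univ _, Complex.normSq_pos.2 hi⟩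
  have hlow : l₁ n * (dotC f f).re ≤ (dotC f (M₁ *ᵥ f)).re :=
    le_re_dotC_mulVec hu (by simp) hue f fun j hj =>
      hmono₁ (not_lt.1 fun hjn => hj (ha ⟨j, mem_Iio.2 hjn⟩))
  have hmid : (dotC f (M₁ *ᵥ f)).re ≤ (dotC f (M₂ *ᵥ f)).re := by
    have := (Complex.le_def.1 (hM.dotProduct_mulVec_nonneg f)).1
    simpa [sub_mulVec, dotProduct_sub, dotC_eq_star_dotProduct] using this
  have hup : (dotC f (M₂ *ᵥ f)).re ≤ l₂ n * (dotC f f).re :=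
    re_dotC_mulVec_sum_smul_le hw' (fun i => hwe i) a fun i => hmono₂ (mem_Iic.1 i.2)
  exact le_of_mul_le_mul_right (hlow.trans (hmid.trans hup)) hpos

theorem mem_range_of_mulVec_eq {M : Matrix V V ℂ} {lam : Fin (Fintype.card V) → ℝ}
    (h : IsEigList (M *ᵥ ·) lam) {f : V → ℂ} {x : ℝ} (hf : f ≠ 0) (hx : M *ᵥ f = (x : ℂ) • f) :
    x ∈ Set.range lam := by
  obtain ⟨-, u, hu, he⟩ := h
  have hexp := sum_dotC_smul_of_orthonormal hu (by simp) f
  obtain ⟨j, hj⟩ : ∃ j, dotC (u j) f ≠ 0 := by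
    by_contra! h
    exact hf (by rw [← hexp]; simp [h])
  have key : (lam j : ℂ) * dotC (u j) f = x * dotC (u j) f := by
    calc (lam j : ℂ) * dotC (u j) f = dotC (u j) (M *ᵥ f) := by
          conv_rhs => rw [← hexp, mulVec_sum_smul_of_eigen he, dotC_sum_smul_of_orthonormal hu]
      _ = x * dotC (u j) f := by
          rw [hx, dotC_eq_star_dotProduct, dotProduct_smul, smul_eq_mul, dotC_eq_star_dotProduct]
  exact ⟨j, by exact_mod_cast mul_right_cancel₀ hj key⟩

end IsEigList

theorem Matrix.IsHermitian.exists_isEigList {V : Type} [Fintype V] [DecidableEq V]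
    {M : Matrix V V ℂ} (hM : M.IsHermitian) :
    ∃ lam, IsEigList (M *ᵥ ·) lam ∧ ∑ n, (lam n : ℂ) = M.trace := by
  let σ : Fin (Fintype.card V) ≃ V :=
    Fin.revPerm.trans (Fintype.equivOfCardEq (Fintype.card_fin _))
  have hσ : ∀ k, hM.eigenvalues (σ k) = hM.eigenvalues₀ k.rev := fun k => by
    simp [σ, IsHermitian.eigenvalues]
  refine ⟨fun k => hM.eigenvalues (σ k),
    ⟨fun k l hkl => ?_, fun k => ⇑(hM.eigenvectorBasis (σ k)), fun k l => ?_, fun k => ?_⟩, ?_⟩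
  · simp only [hσ]
    exact hM.eigenvalues₀_antitone (Fin.rev_le_rev.2 hkl)
  · rw [dotC_eq_star_dotProduct, dotProduct_comm, ← EuclideanSpace.inner_eq_star_dotProduct,
      orthonormal_iff_ite.1 hM.eigenvectorBasis.orthonormal]
    exact if_congr σ.injective.eq_iff rfl rfl
  · simp only [hM.mulVec_eigenvectorBasis]
    ext v
    simp
  · rw [hM.trace_eq_sum_eigenvalues]
    exact σ.sum_comp fun v => (hM.eigenvalues v : ℂ)

section Bands

variable {Θ ι : Type*} [Fintype ι] {lam : Θ → ι → ℝ} {lo hi : ι → ℝ}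

theorem sum_sSup_sub_sInf_le [Nonempty Θ] (hband : ∀ θ n, lo n ≤ lam θ n ∧ lam θ n ≤ hi n) :
    ∑ n, (sSup (Set.range fun θ => lam θ n) - sInf (Set.range fun θ => lam θ n))
      ≤ ∑ n, (hi n - lo n) :=
  sum_le_sum fun n _ => sub_le_sub
    (csSup_le (Set.range_nonempty _) (Set.forall_mem_range.2 fun θ => (hband θ n).2))
    (le_csInf (Set.range_nonempty _) (Set.forall_mem_range.2 fun θ => (hband θ n).1))

theorem volume_iUnion_range_le (hband : ∀ θ n, lo n ≤ lam θ n ∧ lam θ n ≤ hi n) :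
    MeasureTheory.volume (⋃ n, Set.range fun θ => lam θ n)
      ≤ ENNReal.ofReal
          (∑ n, (sSup (Set.range fun θ => lam θ n) - sInf (Set.range fun θ => lam θ n))) := by
  have hbdd : ∀ n, Bornology.IsBounded (Set.range fun θ => lam θ n) := fun n =>
    (Metric.isBounded_Icc (lo n) (hi n)).subset (Set.range_subset_iff.2 (hband · n))
  calc MeasureTheory.volume (⋃ n, Set.range fun θ => lam θ n)
      ≤ ∑ n, MeasureTheory.volume (Set.range fun θ => lam θ n) :=
        MeasureTheory.measure_iUnion_fintype_le _ _
    _ ≤ ∑ n, ENNReal.ofReal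
          (sSup (Set.range fun θ => lam θ n) - sInf (Set.range fun θ => lam θ n)) :=
        sum_le_sum fun n _ => (Real.volume_le_diam _).trans_eq (Real.ediam_eq (hbdd n))
    _ = _ := (ENNReal.ofReal_sum_of_nonneg fun n _ =>
        sub_nonneg.2 (Real.sInf_le_sSup _ (hbdd n).bddBelow (hbdd n).bddAbove)).symm

end Bands

theorem Finset.sum_comp_of_involutive {E M : Type*} [AddCommMonoid M] {inv : E → E}
    (hinv : Function.Involutive inv) {S : Finset E} (hS : ∀ e ∈ S, inv e ∈ S) (g : E → M) :
    ∑ e ∈ S, g (inv e) = ∑ e ∈ S, g e :=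
  sum_nbij' inv inv hS hS (fun e _ => hinv e) (fun e _ => hinv e) fun _ _ => rfl

section Hopping

variable {V E : Type} (o t : E → V)

def hopMatrix (S : Finset E) (ζ : E → ℂ) : Matrix V V ℂ :=
  Matrix.of fun v w => ∑ e ∈ S with o e = v ∧ t e = w, ζ e

def degMatrix (S : Finset E) : Matrix V V ℂ :=
  Matrix.diagonal fun v => (#{e ∈ S | o e = v} : ℂ)

theorem hopMatrix_neg (S : Finset E) (ζ : E → ℂ) :
    hopMatrix o t S (-ζ) = -hopMatrix o t S ζ := by
  ext
  simp [hopMatrix]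

theorem isHermitian_degMatrix (S : Finset E) : (degMatrix o S).IsHermitian :=
  isHermitian_diagonal_of_self_adjoint _ (funext fun v => by simp)

variable [Fintype V]

theorem hopMatrix_mulVec (S : Finset E) (ζ : E → ℂ) (f : V → ℂ) (v : V) :
    (hopMatrix o t S ζ *ᵥ f) v = ∑ e ∈ S with o e = v, ζ e * f (t e) := by
  simp only [mulVec, dotProduct, hopMatrix, of_apply, sum_mul]
  rw [← sum_fiberwise {e ∈ S | o e = v} t]
  refine sum_congr rfl fun w _ => ?_
  rw [filter_filter]
  exact sum_congr rfl fun e he => by rw [(mem_filter.1 he).2.2]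

theorem star_dotProduct_hopMatrix_mulVec (S : Finset E) (ζ : E → ℂ) (f : V → ℂ) :
    star f ⬝ᵥ (hopMatrix o t S ζ *ᵥ f) = ∑ e ∈ S, conj (f (o e)) * ζ e * f (t e) := by
  simp only [dotProduct, hopMatrix_mulVec, mul_sum]
  rw [← sum_fiberwise S o]
  refine sum_congr rfl fun v _ => sum_congr rfl fun e he => ?_
  rw [(mem_filter.1 he).2, Pi.star_apply, Complex.star_def, mul_assoc]

theorem star_dotProduct_degMatrix_mulVec (S : Finset E) (f : V → ℂ) :
    star f ⬝ᵥ (degMatrix o S *ᵥ f) = ∑ e ∈ S, conj (f (o e)) * f (o e) := by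
  simp only [dotProduct, degMatrix, mulVec_diagonal]
  rw [← sum_fiberwise S o]
  refine sum_congr rfl fun v _ => ?_
  rw [sum_congr rfl fun e he => by rw [(mem_filter.1 he).2], sum_const, nsmul_eq_mul,
    Pi.star_apply, Complex.star_def]
  ring

theorem trace_degMatrix (S : Finset E) : (degMatrix o S).trace = #S := by
  rw [degMatrix, trace_diagonal, ← Nat.cast_sum,
    card_eq_sum_card_fiberwise fun e _ => mem_univ (o e)]

end Hopping

section Reversal

variable {V E : Type} {o t : E → V} {inv : E → E} (hinv : Function.Involutive inv)
  (hoi : ∀ e, o (inv e) = t e) (hti : ∀ e, t (inv e) = o e) {S : Finset E}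
  (hS : ∀ e ∈ S, inv e ∈ S) {ζ : E → ℂ} (hζ : ∀ e ∈ S, ζ (inv e) = conj (ζ e))
include hinv hoi hti hS hζ

theorem isHermitian_hopMatrix : (hopMatrix o t S ζ).IsHermitian := by
  ext v w
  simp only [conjTranspose_apply, hopMatrix, of_apply, star_sum, sum_filter]
  rw [← sum_comp_of_involutive hinv hS]
  refine sum_congr rfl fun e he => ?_
  simp only [hoi, hti, hζ e he, and_comm]
  split_ifs <;> simp

variable [Fintype V] (hζ1 : ∀ e ∈ S, ‖ζ e‖ = 1)
include hζ1

theorem posSemidef_degMatrix_add_hopMatrix : (degMatrix o S + hopMatrix o t S ζ).PosSemidef := by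
  refine .of_dotProduct_mulVec_nonneg
    ((isHermitian_degMatrix o S).add (isHermitian_hopMatrix hinv hoi hti hS hζ)) fun f => ?_
  rw [add_mulVec, dotProduct_add, star_dotProduct_degMatrix_mulVec,
    star_dotProduct_hopMatrix_mulVec, ← sum_add_distrib]
  -- pairing `e` with `inv e` turns the form into half a sum of squares
  have h1 : ∑ e ∈ S, conj (f (o e)) * f (o e) = ∑ e ∈ S, conj (f (t e)) * f (t e) := by
    rw [← sum_comp_of_involutive hinv hS]
    simp only [hoi]
  have h2 : ∑ e ∈ S, conj (f (o e)) * ζ e * f (t e)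
      = ∑ e ∈ S, conj (f (t e)) * conj (ζ e) * f (o e) := by
    rw [← sum_comp_of_involutive hinv hS]
    exact sum_congr rfl fun e he => by rw [hoi, hti, hζ e he]
  have key : ∑ e ∈ S, (conj (f (o e)) * f (o e) + conj (f (o e)) * ζ e * f (t e))
      = (((∑ e ∈ S, Complex.normSq (f (o e) + ζ e * f (t e))) / 2 : ℝ) : ℂ) := by
    have hsq : ∀ e ∈ S, (Complex.normSq (f (o e) + ζ e * f (t e)) : ℂ)
        = conj (f (o e)) * f (o e) + conj (f (o e)) * ζ e * f (t e)
          + (conj (f (t e)) * conj (ζ e) * f (o e) + conj (f (t e)) * f (t e)) := fun e he => by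
      have hζζ : conj (ζ e) * ζ e = 1 := by simp [Complex.conj_mul', hζ1 e he]
      rw [Complex.normSq_eq_conj_mul_self, map_add, map_mul]
      linear_combination (conj (f (t e)) * f (t e)) * hζζ
    push_cast
    rw [sum_congr rfl hsq]
    simp only [sum_add_distrib, ← h1, ← h2]
    ring
  rw [key]
  exact Complex.zero_le_real.2
    (div_nonneg (sum_nonneg fun e _ => Complex.normSq_nonneg _) two_pos.le)

theorem posSemidef_degMatrix_sub_hopMatrix : (degMatrix o S - hopMatrix o t S ζ).PosSemidef := by
  rw [sub_eq_add_neg, ← hopMatrix_neg]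
  exact posSemidef_degMatrix_add_hopMatrix hinv hoi hti hS (ζ := -ζ)
    (fun e he => by simp [hζ e he]) fun e he => by simp [hζ1 e he]

end Reversal

section Fiber

variable {V E : Type} {d : ℕ} (o t : E → V) (m : E → Fin d → ℝ) (α : E → ℝ)

def fiberPhase (θ : Fin d → ℝ) (e : E) : ℂ :=
  Complex.exp (Complex.I * ((α e + ∑ i, m e i * θ i : ℝ) : ℂ))

theorem norm_fiberPhase (θ : Fin d → ℝ) (e : E) : ‖fiberPhase m α θ e‖ = 1 := by
  rw [fiberPhase, mul_comm, Complex.norm_exp_ofReal_mul_I]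

theorem Complex.exp_I_mul_ofReal_neg (x : ℝ) :
    Complex.exp (Complex.I * ((-x : ℝ) : ℂ)) = conj (Complex.exp (Complex.I * x)) := by
  rw [← Complex.exp_conj, map_mul, Complex.conj_I, Complex.conj_ofReal]
  push_cast
  ring_nf

theorem fiberPhase_inv {inv : E → E} (hm : ∀ e, m (inv e) = -m e) (hα : ∀ e, α (inv e) = -α e)
    (θ : Fin d → ℝ) (e : E) : fiberPhase m α θ (inv e) = conj (fiberPhase m α θ e) := by
  have hneg : α (inv e) + ∑ i, m (inv e) i * θ i = -(α e + ∑ i, m e i * θ i) := by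
    simp only [hm, hα, Pi.neg_apply, neg_mul, sum_neg_distrib, neg_add]
  rw [fiberPhase, fiberPhase, hneg, Complex.exp_I_mul_ofReal_neg]

variable [Fintype E]

def baseHamiltonian (Q : V → ℝ) : Matrix V V ℂ :=
  Matrix.diagonal (fun v => (mdeg o v : ℂ) + Q v)
    - hopMatrix o t {e | m e = 0} fun e => Complex.exp (Complex.I * α e)

theorem fiberLap_add_eq_mulVec [Fintype V] (Q : V → ℝ) (θ : Fin d → ℝ) (f : V → ℂ) :
    (fun v => fiberLap o t m α θ f v + Q v * f v)
      = (baseHamiltonian o t m α Q - hopMatrix o t {e | m e ≠ 0} (fiberPhase m α θ)) *ᵥ f := by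
  ext v
  simp only [baseHamiltonian, sub_mulVec, Pi.sub_apply, mulVec_diagonal, hopMatrix_mulVec,
    fiberLap, filter_filter]
  have hφ : ∀ e ∈ ({e | m e = 0 ∧ o e = v} : Finset E),
      Complex.exp (Complex.I * (α e + ∑ i, m e i * θ i : ℝ)) = Complex.exp (Complex.I * α e) :=
    fun e he => by simp [(mem_filter.1 he).2.1]
  rw [← sum_filter_add_sum_filter_not _ fun e => m e = 0, filter_filter, filter_filter]
  simp only [and_comm (a := o _ = v)]
  rw [sum_congr rfl fun e he => by rw [hφ e he]]
  simp only [fiberPhase]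
  ring

theorem isHermitian_baseHamiltonian [Fintype V] {inv : E → E} (hinv : Function.Involutive inv)
    (hoi : ∀ e, o (inv e) = t e) (hti : ∀ e, t (inv e) = o e)
    (hm : ∀ e, m (inv e) = -m e) (hα : ∀ e, α (inv e) = -α e) (Q : V → ℝ) :
    (baseHamiltonian o t m α Q).IsHermitian := by
  refine (isHermitian_diagonal_of_self_adjoint _ (funext fun v => by simp)).sub
    (isHermitian_hopMatrix hinv hoi hti (by simp [hm]) fun e _ => ?_)
  rw [hα, Complex.exp_I_mul_ofReal_neg]

theorem exists_band_bounds [Fintype V] {inv : E → E} (hinv : Function.Involutive inv)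
    (hoi : ∀ e, o (inv e) = t e) (hti : ∀ e, t (inv e) = o e)
    (hm : ∀ e, m (inv e) = -m e) (hα : ∀ e, α (inv e) = -α e) (Q : V → ℝ)
    {lam : (Fin d → ℝ) → Fin (Fintype.card V) → ℝ}
    (hlam : ∀ θ, IsEigList ((baseHamiltonian o t m α Q
      - hopMatrix o t {e | m e ≠ 0} (fiberPhase m α θ)) *ᵥ ·) (lam θ)) :
    ∃ lo hi : Fin (Fintype.card V) → ℝ,
      (∀ θ n, lo n ≤ lam θ n ∧ lam θ n ≤ hi n) ∧ ∑ n, (hi n - lo n) = 2 * suppCard m := by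
  set S : Finset E := {e | m e ≠ 0}
  have hS : ∀ e ∈ S, inv e ∈ S := by simp [S, hm]
  have hH₀ := isHermitian_baseHamiltonian o t m α hinv hoi hti hm hα Q
  obtain ⟨lo, hlo, hlo_tr⟩ := (hH₀.sub (isHermitian_degMatrix o S)).exists_isEigList
  obtain ⟨hi, hhi, hhi_tr⟩ := (hH₀.add (isHermitian_degMatrix o S)).exists_isEigList
  refine ⟨lo, hi, fun θ n => ⟨?_, ?_⟩, ?_⟩
  · refine hlo.le_of_posSemidef_sub (hlam θ) ?_ n
    rw [sub_sub_sub_cancel_left]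
    exact posSemidef_degMatrix_sub_hopMatrix hinv hoi hti hS
      (fun e _ => fiberPhase_inv m α hm hα θ e) fun e _ => norm_fiberPhase m α θ e
  · refine (hlam θ).le_of_posSemidef_sub hhi ?_ n
    rw [add_sub_sub_cancel]
    exact posSemidef_degMatrix_add_hopMatrix hinv hoi hti hS
      (fun e _ => fiberPhase_inv m α hm hα θ e) fun e _ => norm_fiberPhase m α θ e
  · have : ((∑ n, (hi n - lo n) : ℝ) : ℂ) = 2 * (suppCard m : ℂ) := by
      push_cast
      rw [sum_sub_distrib, hhi_tr, hlo_tr, trace_add, trace_sub, trace_degMatrix,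
        add_sub_sub_cancel, ← two_mul, suppCard]
      -- the two filters differ only in their `Decidable` instances
      congr
      ext
      simp [S]
    exact_mod_cast this

end Fiber

theorem fiber_spectrum_measure_bound_general
    {V E : Type} [Fintype V] [Fintype E] {d : ℕ}
    (o t : E → V) (inv : E → E)
    (hinv : ∀ e, inv (inv e) = e)
    (hoi : ∀ e, o (inv e) = t e) (hti : ∀ e, t (inv e) = o e)
    (m : E → Fin d → ℝ) (hm : ∀ e, m (inv e) = - m e)
    (α : E → ℝ) (hα : ∀ e, α (inv e) = - α e)
    (Q : V → ℝ)
    (lam : (Fin d → ℝ) → Fin (Fintype.card V) → ℝ)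
    (hlam : ∀ θ, IsEigList
      (fun f v => fiberLap o t m α θ f v + (Q v : ℂ) * f v) (lam θ)) :
    (∑ n : Fin (Fintype.card V),
        (sSup (Set.range fun θ => lam θ n) - sInf (Set.range fun θ => lam θ n)))
      ≤ 2 * (suppCard m : ℝ)
    ∧ MeasureTheory.volume
        {x : ℝ | ∃ (θ : Fin d → ℝ) (f : V → ℂ), f ≠ 0 ∧
          ∀ v, fiberLap o t m α θ f v + (Q v : ℂ) * f v = (x : ℂ) * f v}
        ≤ ENNReal.ofReal (2 * (suppCard m : ℝ)) := by
  have hH θ := funext (fiberLap_add_eq_mulVec o t m α Q θ)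
  have hlam' θ := hH θ ▸ hlam θ
  obtain ⟨lo, hi, hband, hsum⟩ := exists_band_bounds o t m α hinv hoi hti hm hα Q hlam'
  have hbands := (sum_sSup_sub_sInf_le hband).trans_eq hsum
  refine ⟨hbands, ?_⟩
  have hspec : {x : ℝ | ∃ (θ : Fin d → ℝ) (f : V → ℂ), f ≠ 0 ∧
      ∀ v, fiberLap o t m α θ f v + (Q v : ℂ) * f v = (x : ℂ) * f v}
      ⊆ ⋃ n, Set.range fun θ => lam θ n := by
    rintro x ⟨θ, f, hf, hx⟩
    obtain ⟨n, hn⟩ := (hlam' θ).mem_range_of_mulVec_eq hf (by rw [← hH θ]; exact funext hx)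
    exact Set.mem_iUnion.2 ⟨n, θ, hn⟩
  exact (MeasureTheory.measure_mono hspec).trans
    ((volume_iUnion_range_le hband).trans (ENNReal.ofReal_le_ofReal hbands))

/-- The total band length of the fiber Schrödinger operators
`H(θ) = Δ_{m,α}(θ) + Q` is at most `2·#supp m`, and consequently the Lebesgue
measure of the union of their spectra is at most `2·#supp m` (which equals
`4I` where `I = (1/2)·#supp m`). -/
theorem fiber_spectrum_measure_bound
    {V E : Type} [Fintype V] [Fintype E] [Nonempty V] {d : ℕ}
    (o t : E → V) (inv : E → E)
    (hfp : ∀ e, inv e ≠ e) (hinv : ∀ e, inv (inv e) = e)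
    (hoi : ∀ e, o (inv e) = t e) (hti : ∀ e, t (inv e) = o e)
    (m : E → Fin d → ℝ) (hm : ∀ e, m (inv e) = - m e)
    (α : E → ℝ) (hα : ∀ e, α (inv e) = - α e)
    (Q : V → ℝ)
    (lam : (Fin d → ℝ) → Fin (Fintype.card V) → ℝ)
    (hlam : ∀ θ, IsEigList
      (fun f v => fiberLap o t m α θ f v + (Q v : ℂ) * f v) (lam θ)) :
    (∑ n : Fin (Fintype.card V),
        (sSup (Set.range fun θ => lam θ n) - sInf (Set.range fun θ => lam θ n)))
      ≤ 2 * (suppCard m : ℝ)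
    ∧ MeasureTheory.volume
        {x : ℝ | ∃ (θ : Fin d → ℝ) (f : V → ℂ), f ≠ 0 ∧
          ∀ v, fiberLap o t m α θ f v + (Q v : ℂ) * f v = (x : ℂ) * f v}
        ≤ ENNReal.ofReal (2 * (suppCard m : ℝ)) :=
  fiber_spectrum_measure_bound_general o t inv hinv hoi hti m hm α hα Q lam hlam
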